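/- There exist symmetric matrices a_1^+, …, a_M^+ in M_k(F) (M = k(k+1)/2, transpose involution) and matrices b_1, …, b_{M-1} in M_k(F) such that Cap_M(a_1^+,…,a_M^+; b_1,…,b_{M-1}) = e_{1,k}. In particular (M_k(F), t) does not satisfy the *-Capelli polynomial Cap^*_M[Y,X]. -/

import Mathlib

open Matrix

/-- Product of a list in a (possibly non-unital) ring; the empty product is 0. -/
def ncProd {A : Type} [Mul A] [Zero A] : List A → A
  | [] => 0
  | a :: l => l.foldl (· * ·) a

/-- The m-th Capelli polynomial evaluated at alternating entries `t` and
interspersed entries `x`. -/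
def capelli {A : Type} [NonUnitalRing A] (m : ℕ) (t : Fin m → A)
    (x : Fin (m - 1) → A) : A :=
  ∑ σ : Equiv.Perm (Fin m), (Equiv.Perm.sign σ : ℤ) •
    ncProd (List.ofFn fun i : Fin m =>
      if h : (i : ℕ) < m - 1 then t (σ i) * x ⟨(i : ℕ), h⟩ else t (σ i))

/-!
Enumerate the symmetric matrix units `a_i = e_{p_i q_i} + e_{q_i p_i}` (just `e_{pp}` on the
diagonal) so that `a_1 = e_{11}` and `a_M = e_{kk}`, and link consecutive ones by
`b_i = e_{q_i p_{i+1}}`. Each monomial `a_{σ 1} b_1 ⋯ b_{M-1} a_{σ M}` then collapses to a product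
of entries, so the `(u, v)` entry of the Capelli sum is the determinant of the incidence matrix
between the `a_j` and the pairs `(u, q_1), (p_2, q_2), …, (p_{M-1}, q_{M-1}), (p_M, v)` met along
the chain. For `(u, v) = (1, k)` this matrix is the identity. If `u ≠ 1`, no pair along the chain
is `(1, 1)`, so the row of `a_1` vanishes; symmetrically for `v ≠ k` and `a_M`.
-/

theorem ncProd_ofFn_eq_prod {A : Type} [Monoid A] [Zero A] {n : ℕ} (f : Fin (n + 1) → A) :
    ncProd (List.ofFn f) = (List.ofFn f).prod := by
  simp [List.ofFn_succ, ncProd, List.prod_eq_foldl]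

theorem Sym2.mk_eq_diag_iff {α : Type*} {x y a : α} : s(x, y) = s(a, a) ↔ x = a ∧ y = a := by
  simp

theorem exists_finEquiv_apply_zero_apply_last {α : Type*} [Fintype α] {n : ℕ}
    (h : Fintype.card α = n + 1) {a b : α} (hab : a = b → n = 0) :
    ∃ e : Fin (n + 1) ≃ α, e 0 = a ∧ e (Fin.last n) = b := by
  classical
  let f := (Fintype.equivFinOfCardEq h).symm
  rcases Nat.eq_zero_or_pos n with rfl | hn
  · have : Subsingleton α := Fintype.card_le_one_iff_subsingleton.mp h.le
    exact ⟨f, Subsingleton.elim _ _, Subsingleton.elim _ _⟩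
  let g := f.trans (Equiv.swap (f 0) a)
  have hg0 : g 0 = a := by simp [g]
  have hne : a ≠ g (Fin.last n) := by
    rw [← hg0]
    exact g.injective.ne (Fin.ext_iff.not.mpr (by simp; omega))
  refine ⟨g.trans (Equiv.swap (g (Fin.last n)) b), ?_, by simp⟩
  rw [Equiv.trans_apply, hg0, Equiv.swap_apply_of_ne_of_ne hne fun h => hn.ne' (hab h)]

theorem Matrix.mul_single_one_mul_apply {l m n o R : Type*} [Fintype m] [Fintype n]
    [DecidableEq m] [DecidableEq n] [NonAssocSemiring R]
    (A : Matrix l m R) (B : Matrix n o R) (i : m) (j : n) (x : l) (y : o) :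
    (A * single i j (1 : R) * B) x y = A x i * B j y := by
  simp [Matrix.mul_apply, Matrix.single_apply, ite_and]

section

variable {ι R : Type} [Fintype ι] [DecidableEq ι]

omit [Fintype ι] in
def linkSingles [Zero R] [One R] {n : ℕ} (p q : Fin (n + 1) → ι) (j : Fin n) : Matrix ι ι R :=
  single (q j.castSucc) (p j.succ) 1

omit [Fintype ι] in
theorem linkSingles_update_update [Zero R] [One R] {n : ℕ} (p q : Fin (n + 1) → ι) (u v : ι) :
    (linkSingles (Function.update p 0 u) (Function.update q (Fin.last n) v) : Fin n → _) =
      (linkSingles p q : Fin n → Matrix ι ι R) := by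
  funext j
  rw [linkSingles, linkSingles, Function.update_of_ne (Fin.succ_ne_zero j),
    Function.update_of_ne (Fin.castSucc_lt_last j).ne]

omit [Fintype ι] in
def sym2Single [Zero R] [One R] (z : Sym2 ι) : Matrix ι ι R :=
  Matrix.of fun x y => if s(x, y) = z then 1 else 0

omit [Fintype ι] in
theorem sym2Single_transpose [Zero R] [One R] (z : Sym2 ι) :
    (sym2Single z : Matrix ι ι R)ᵀ = sym2Single z := by
  ext x y
  simp [sym2Single, Sym2.eq_swap]

theorem ncProd_ofFn_mul_linkSingles_apply [CommSemiring R] (n : ℕ)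
    (A : Fin (n + 1) → Matrix ι ι R) (p q : Fin (n + 1) → ι) :
    ncProd (List.ofFn fun i : Fin (n + 1) =>
        if h : (i : ℕ) < n then A i * linkSingles p q ⟨i, h⟩ else A i) (p 0) (q (Fin.last n)) =
      ∏ i, A i (p i) (q i) := by
  induction n with
  | zero => simp [ncProd]
  | succ n ih =>
    rw [ncProd_ofFn_eq_prod, List.ofFn_succ, List.prod_cons, ← ncProd_ofFn_eq_prod]
    have hrest : (List.ofFn fun i : Fin (n + 1) =>
        if h : (i.succ : ℕ) < n + 1 then A i.succ * linkSingles p q ⟨i.succ, h⟩ else A i.succ) =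
        List.ofFn fun i : Fin (n + 1) => if h : (i : ℕ) < n then
          A i.succ * linkSingles (fun i => p i.succ) (fun i => q i.succ) ⟨i, h⟩ else A i.succ := by
      congr 1
      funext i
      simp only [Fin.val_succ, Nat.add_lt_add_iff_right]
      rfl
    rw [hrest, dif_pos (by simp), ← Fin.succ_last, linkSingles, mul_single_one_mul_apply,
      Fin.prod_univ_succ]
    exact congrArg _ (ih (fun i => A i.succ) (fun i => p i.succ) (fun i => q i.succ))

variable [CommRing R]

theorem capelli_linkSingles_apply {n : ℕ} (t : Fin (n + 1) → Matrix ι ι R)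
    (p q : Fin (n + 1) → ι) (u v : ι) :
    capelli (n + 1) t (linkSingles p q) u v =
      (Matrix.of fun j i =>
        t j (Function.update p 0 u i) (Function.update q (Fin.last n) v i)).det := by
  rw [det_apply', ← linkSingles_update_update p q u v]
  simp only [capelli, Matrix.sum_apply, Matrix.smul_apply, of_apply]
  refine Finset.sum_congr rfl fun σ _ => ?_
  rw [zsmul_eq_mul, ← ncProd_ofFn_mul_linkSingles_apply n (fun i => t (σ i)),
    Function.update_self, Function.update_self]
  rfl

theorem capelli_sym2Single_linkSingles {n : ℕ} {e : Fin (n + 1) → Sym2 ι}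
    (he : Function.Injective e) {p q : Fin (n + 1) → ι} (hpq : ∀ i, e i = s(p i, q i))
    (h0 : p 0 = q 0) (hl : p (Fin.last n) = q (Fin.last n)) :
    capelli (n + 1) (fun i => sym2Single (e i)) (linkSingles p q) =
      (single (p 0) (q (Fin.last n)) 1 : Matrix ι ι R) := by
  ext u v
  rw [capelli_linkSingles_apply]
  set p' := Function.update p 0 u
  set q' := Function.update q (Fin.last n) v
  have hp'0 : p' 0 = u := Function.update_self ..
  have hq'l : q' (Fin.last n) = v := Function.update_self ..
  have hp' : ∀ i ≠ 0, p' i = p i := fun i hi => Function.update_of_ne hi ..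
  have hq' : ∀ i ≠ Fin.last n, q' i = q i := fun i hi => Function.update_of_ne hi ..
  have hmid : ∀ i, i ≠ 0 → i ≠ Fin.last n → e i = s(p' i, q' i) := fun i hi0 hil => by
    rw [hp' i hi0, hq' i hil, hpq]
  by_cases hu : u = p 0
  · by_cases hv : v = q (Fin.last n)
    · have hN : (Matrix.of fun j i => (sym2Single (e j) : Matrix ι ι R) (p' i) (q' i)) = 1 := by
        ext j i
        simp [p', q', hu, hv, sym2Single, ← hpq, he.eq_iff, Matrix.one_apply, eq_comm]
      rw [hN, det_one, hu, hv, single_apply_same]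
    · rw [single_apply_of_col_ne _ _ (Ne.symm hv)]
      refine det_eq_zero_of_row_eq_zero (Fin.last n) fun i => if_neg fun h => ?_
      rw [hpq, hl, Sym2.mk_eq_diag_iff] at h
      rcases eq_or_ne i (Fin.last n) with rfl | hil
      · exact hv (hq'l ▸ h.2)
      rcases eq_or_ne i 0 with rfl | hi0
      · exact hil (he (by rw [hpq, hpq, h0, hl, ← hq' 0 hil, h.2]))
      · exact hil (he (by rw [hmid i hi0 hil, h.1, h.2, hpq, hl]))
  · rw [single_apply_of_row_ne (Ne.symm hu)]
    refine det_eq_zero_of_row_eq_zero 0 fun i => if_neg fun h => ?_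
    rw [hpq, ← h0, Sym2.mk_eq_diag_iff] at h
    rcases eq_or_ne i 0 with rfl | hi0
    · exact hu (hp'0 ▸ h.1)
    rcases eq_or_ne i (Fin.last n) with rfl | hil
    · exact hi0 (he (by rw [hpq, hpq, ← hl, ← h0, ← hp' _ hi0, h.1]))
    · exact hi0 (he (by rw [hmid i hi0 hil, h.1, h.2, hpq, h0]))

end

theorem exists_symm_capelli_eq_single (R : Type) [CommRing R] {k : ℕ} (hk : 0 < k) :
    ∃ (a : Fin (k * (k + 1) / 2) → Matrix (Fin k) (Fin k) R)
      (b : Fin (k * (k + 1) / 2 - 1) → Matrix (Fin k) (Fin k) R),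
      (∀ i, (a i)ᵀ = a i) ∧
      capelli (k * (k + 1) / 2) a b = single ⟨0, hk⟩ ⟨k - 1, Nat.sub_one_lt_of_lt hk⟩ 1 := by
  have h2 : 2 ≤ k * (k + 1) := by nlinarith
  obtain ⟨n, hn⟩ : ∃ n, k * (k + 1) / 2 = n + 1 := ⟨k * (k + 1) / 2 - 1, by omega⟩
  have hcard : Fintype.card (Sym2 (Fin k)) = n + 1 := by
    rw [Sym2.card, Fintype.card_fin, Nat.choose_two_right, ← hn, add_tsub_cancel_right, mul_comm]
  let first : Fin k := ⟨0, hk⟩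
  let last : Fin k := ⟨k - 1, Nat.sub_one_lt_of_lt hk⟩
  obtain ⟨e, he0, hel⟩ := exists_finEquiv_apply_zero_apply_last hcard
    (a := s(first, first)) (b := s(last, last)) fun h => by
      have h0k : 0 = k - 1 := congrArg Fin.val (Sym2.mk_eq_diag_iff.mp h).1
      obtain rfl : k = 1 := by omega
      omega
  choose p q hpq using fun i => (Sym2.exists (f := fun z => e i = z)).mp ⟨e i, rfl⟩
  obtain ⟨hp0, hq0⟩ := Sym2.mk_eq_diag_iff.mp ((hpq 0).symm.trans he0)
  obtain ⟨hpl, hql⟩ := Sym2.mk_eq_diag_iff.mp ((hpq (Fin.last n)).symm.trans hel)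
  rw [hn]
  refine ⟨fun i => sym2Single (e i), linkSingles p q, fun i => sym2Single_transpose _, ?_⟩
  rw [capelli_sym2Single_linkSingles e.injective hpq (hp0.trans hq0.symm) (hpl.trans hql.symm),
    hp0, hql]

/-- with M = k(k+1)/2, there are symmetric matrices a₁⁺,…,a_M⁺ and
matrices b₁,…,b_{M-1} in M_k(F) with Cap_M(a⁺; b) = e_{1,k}; in particular
(M_k(F), t) does not satisfy the *-Capelli polynomial Cap*_M[Y,X]. -/
theorem stmt_12 (F : Type) [Field F] (k : ℕ) (hk : 0 < k) :
    (∃ (a : Fin (k * (k + 1) / 2) → Matrix (Fin k) (Fin k) F)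
        (b : Fin (k * (k + 1) / 2 - 1) → Matrix (Fin k) (Fin k) F),
      (∀ i, (a i)ᵀ = a i) ∧
      capelli (k * (k + 1) / 2) a b =
        Matrix.single ⟨0, hk⟩ ⟨k - 1, by omega⟩ (1 : F)) ∧
    ¬ (∀ t : Fin (k * (k + 1) / 2) → Matrix (Fin k) (Fin k) F,
        (∀ i, (t i)ᵀ = t i) →
        ∀ x : Fin (k * (k + 1) / 2 - 1) → Matrix (Fin k) (Fin k) F,
        capelli (k * (k + 1) / 2) t x = 0) := by
  obtain ⟨a, b, ha, hab⟩ := exists_symm_capelli_eq_single F hk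
  refine ⟨⟨a, b, ha, hab⟩, fun h => ?_⟩
  have := congr_fun₂ (hab.symm.trans (h a ha b)) ⟨0, hk⟩ ⟨k - 1, by omega⟩
  simp at this
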